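/- Let n ≥ 3 be an integer and γ, δ real numbers, and set α := −1 − δ/(n(n+1)) − γ/((n+1)(n+2)) and β := (n+1)/(n−1) + δ/(n(n−1)) + γ/(n(n+1)). Then the function N(ρ) := ρ^{n+1} − ρⁿ + ρⁿ·P(ρ) + α + βρ satisfies N(1) = 0, N'(1) = 0 and N''(1) = 0; that is, N has a zero of order at least 3 at ρ = 1. -/

import Mathlib

/-!
Write `N(ρ) = ρⁿ q(ρ) + α + βρ` with the quadratic `q(ρ) = ρ - 1 + P(ρ)`. By Leibniz' rule at
`ρ = 1` we get `N(1) = q(1) + α + β`, `N'(1) = n q(1) + q'(1) + β` and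
`N''(1) = n(n-1) q(1) + 2n q'(1) + q''(1)`. The first two vanish by the choice of `α` and `β`;
the third involves neither and vanishes thanks to the constant term `-(2n+δ)/(n(n-1))` of `P`.
-/

/-- The polynomial P(ρ). -/
noncomputable def P (n : ℕ) (γ δ : ℝ) (ρ : ℝ) : ℝ :=
  -(2 * (n : ℝ) + δ) / ((n : ℝ) * ((n : ℝ) - 1)) + (δ - γ) * ρ / ((n : ℝ) * ((n : ℝ) + 1))
    + γ * ρ ^ 2 / (((n : ℝ) + 1) * ((n : ℝ) + 2))

/-- The numerator N(ρ) = ρ^{n+1} − ρⁿ + ρⁿP(ρ) + α + βρ of h''. -/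
noncomputable def Nfun (n : ℕ) (α β γ δ : ℝ) (ρ : ℝ) : ℝ :=
  ρ ^ (n + 1) - ρ ^ n + ρ ^ n * P n γ δ ρ + α + β * ρ

open Polynomial

theorem deriv_polynomial_eval (p : ℝ[X]) :
    deriv (fun x => p.eval x) = fun x => p.derivative.eval x :=
  funext fun _ => p.deriv

section LeibnizAtOne

variable {R : Type*} [CommRing R] (n : ℕ) (q : R[X])

theorem eval_one_derivative_X_pow_mul :
    (X ^ n * q).derivative.eval 1 = n * q.eval 1 + q.derivative.eval 1 := by
  simp [derivative_X_pow]

theorem eval_one_derivative_derivative_X_pow_mul :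
    (X ^ n * q).derivative.derivative.eval 1 =
      n * (n - 1) * q.eval 1 + 2 * n * q.derivative.eval 1 + q.derivative.derivative.eval 1 := by
  rcases n with _ | _ | n
  · simp
  · simp only [zero_add, pow_one, derivative_mul, derivative_X, one_mul, derivative_add, eval_add,
      eval_mul, eval_X, Nat.cast_one, sub_self, mul_zero, zero_mul, mul_one]
    ring
  · simp only [derivative_mul, derivative_X_pow_succ, Nat.cast_add, Nat.cast_one, map_add,
      map_natCast, map_one, derivative_natCast, derivative_one, add_zero, zero_mul,
      zero_add, eval_add, eval_mul, eval_natCast, eval_one, eval_pow, eval_X, one_pow, mul_one,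
      one_mul, add_sub_cancel_right]
    ring

end LeibnizAtOne

noncomputable def polyP (n : ℕ) (γ δ : ℝ) : ℝ[X] :=
  C (-(2 * (n : ℝ) + δ) / ((n : ℝ) * ((n : ℝ) - 1))) + C ((δ - γ) / ((n : ℝ) * ((n : ℝ) + 1))) * X
    + C (γ / (((n : ℝ) + 1) * ((n : ℝ) + 2))) * X ^ 2

theorem Nfun_eq_eval (n : ℕ) (α β γ δ : ℝ) :
    Nfun n α β γ δ = fun ρ => (X ^ n * (X - 1 + polyP n γ δ) + C α + C β * X).eval ρ := by
  funext ρ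
  simp only [Nfun, P, polyP, eval_add, eval_mul, eval_pow, eval_X, eval_C, eval_sub, eval_one]
  ring

/-- First part of Lemma 4.4: for the choice of α, β as in (4.3), (4.4), the numerator of h''
has a zero of order at least 3 at ρ = 1. -/
theorem numerator_triple_zero (n : ℕ) (hn : 3 ≤ n) (γ δ : ℝ)
    (α : ℝ) (hα : α = -1 - δ / ((n : ℝ) * ((n : ℝ) + 1)) - γ / (((n : ℝ) + 1) * ((n : ℝ) + 2)))
    (β : ℝ) (hβ : β = ((n : ℝ) + 1) / ((n : ℝ) - 1) + δ / ((n : ℝ) * ((n : ℝ) - 1))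
      + γ / ((n : ℝ) * ((n : ℝ) + 1))) :
    Nfun n α β γ δ 1 = 0 ∧ deriv (Nfun n α β γ δ) 1 = 0 ∧
      deriv (deriv (Nfun n α β γ δ)) 1 = 0 := by
  have hn' : (3 : ℝ) ≤ n := by exact_mod_cast hn
  have : (n : ℝ) ≠ 0 := by linarith
  have : (n : ℝ) - 1 ≠ 0 := by linarith
  have : (n : ℝ) + 1 ≠ 0 := by linarith
  have : (n : ℝ) + 2 ≠ 0 := by linarith
  subst hα hβ
  rw [Nfun_eq_eval, deriv_polynomial_eval, deriv_polynomial_eval]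
  simp only [derivative_add, derivative_C, derivative_C_mul_X, eval_add, eval_mul, eval_C, eval_X,
    add_zero, mul_one, eval_one_derivative_X_pow_mul, eval_one_derivative_derivative_X_pow_mul]
  simp only [polyP, derivative_sub, derivative_mul, derivative_C, derivative_X,
    derivative_one, derivative_X_pow_succ, eval_add, eval_sub, eval_mul, eval_pow, eval_C, eval_X,
    eval_one, eval_zero, map_add, map_one, Nat.cast_one, pow_one, one_pow, zero_mul, mul_one, one_mul,
    add_zero, zero_add, sub_zero, sub_self]
  refine ⟨?_, ?_, ?_⟩ <;> field_simp <;> ring
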